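/- A set E ⊆ ℕ is an I₀ set if and only if every two disjoint subsets A, B of E are separable by some rotation. -/

import Mathlib

/-- A sequence `ψ : ℕ → ℂ` is almost periodic if it is a uniform limit of
trigonometric polynomials. -/
def AlmostPeriodic (ψ : ℕ → ℂ) : Prop :=
  ∀ ε : ℝ, 0 < ε → ∃ (m : ℕ) (c : Fin m → ℂ) (α : Fin m → ℝ),
    ∀ n : ℕ, ‖ψ n - ∑ j, c j * Complex.exp (2 * (Real.pi : ℂ) * Complex.I * (n : ℂ) * (α j : ℂ))‖ < ε

/-- A set `E ⊆ ℕ` is an `I₀` set if every bounded function on `E` extends to an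
almost periodic sequence on `ℕ`. -/
def IsI0Set (E : Set ℕ) : Prop :=
  ∀ b : ℕ → ℂ, (∃ C : ℝ, ∀ n ∈ E, ‖b n‖ ≤ C) →
    ∃ ψ : ℕ → ℂ, AlmostPeriodic ψ ∧ ∀ r ∈ E, ψ r = b r

/-- Two sets `A, B ⊆ ℕ` are separable by some rotation if there are `d ∈ ℕ` and
`α ∈ (ℝ/ℤ)^d` such that the closures of `Aα` and `Bα` in `(ℝ/ℤ)^d` are disjoint. -/
def SeparableByRotation (A B : Set ℕ) : Prop :=
  ∃ (d : ℕ) (α : Fin d → AddCircle (1 : ℝ)),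
    Disjoint (closure ((fun a : ℕ => a • α) '' A)) (closure ((fun b : ℕ => b • α) '' B))

/-!
(⇒) Interpolate the indicator of `A` on `E` and approximate the interpolant within `1/4` by a
trigonometric polynomial with frequencies `α`. Read as a continuous function on the torus
`(ℝ/ℤ)^d`, it has modulus `≥ 3/4` on `Aα` and `≤ 1/4` on `Bα`, hence on their closures.

(⇐) Send `n` to the point `a ↦ n • a` of the compact space `𝕋^𝕋`, `𝕋 = ℝ/ℤ`. Separability
makes disjoint subsets of `E` have disjoint closures there, so the closure of the image of `E`
is its Stone–Čech compactification, and by Tietze every bounded function on `E` is the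
restriction of a continuous function `F` on `𝕋^𝕋`. The evaluations `x ↦ x a` separate points,
so by Stone–Weierstrass `n ↦ F (n • ·)` is a uniform limit of trigonometric polynomials.
-/

open Set Filter Topology
open scoped Pointwise

universe u v

theorem Ultrafilter.extend_mem_closure_image {α X : Type*} [TopologicalSpace X] [T2Space X]
    [CompactSpace X] (f : α → X) {u : Ultrafilter α} {A : Set α} (hA : A ∈ u) :
    Ultrafilter.extend f u ∈ closure (f '' A) :=
  mem_closure_of_tendsto (ultrafilter_extend_eq_iff.mp rfl)
    (Filter.mem_of_superset hA fun _ ha => mem_image_of_mem f ha)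

theorem Ultrafilter.exists_mem_compl_mem_of_ne {α : Type*} {u v : Ultrafilter α} (huv : u ≠ v) :
    ∃ A ∈ u, Aᶜ ∈ v := by
  by_contra! h
  exact huv (Ultrafilter.eq_of_le fun A hA => Ultrafilter.compl_notMem_iff.mp (h A hA)).symm

theorem Ultrafilter.extend_injective {α X : Type*} [TopologicalSpace X] [T2Space X]
    [CompactSpace X] {f : α → X}
    (hf : ∀ A B : Set α, Disjoint A B → Disjoint (closure (f '' A)) (closure (f '' B))) :
    Function.Injective (Ultrafilter.extend f) := by
  intro u v huv
  by_contra hne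
  obtain ⟨A, hAu, hAv⟩ := Ultrafilter.exists_mem_compl_mem_of_ne hne
  exact (hf A Aᶜ disjoint_compl_right).ne_of_mem (extend_mem_closure_image f hAu)
    (extend_mem_closure_image f hAv) huv

theorem exists_continuousMap_comp_eq_of_disjoint_closure {α : Type*} {X : Type u} {Y : Type v}
    [TopologicalSpace X] [T2Space X] [CompactSpace X] [TopologicalSpace Y] [T2Space Y]
    [TietzeExtension.{u, v} Y] {f : α → X}
    (hf : ∀ A B : Set α, Disjoint A B → Disjoint (closure (f '' A)) (closure (f '' B)))
    {b : α → Y} {K : Set Y} (hK : IsCompact K) (hbK : ∀ a, b a ∈ K) :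
    ∃ F : C(X, Y), ⇑F ∘ f = b := by
  have : CompactSpace K := isCompact_iff_compactSpace.mp hK
  have hι : IsClosedEmbedding (Ultrafilter.extend f) :=
    (continuous_ultrafilter_extend f).isClosedEmbedding (Ultrafilter.extend_injective hf)
  let bK : α → K := fun a => ⟨b a, hbK a⟩
  let g : C(Ultrafilter α, Y) := ⟨Subtype.val ∘ Ultrafilter.extend bK,
    continuous_subtype_val.comp (continuous_ultrafilter_extend bK)⟩
  obtain ⟨F, hF⟩ := ContinuousMap.exists_extension' hι g
  refine ⟨F, ?_⟩
  calc ⇑F ∘ f = ⇑F ∘ Ultrafilter.extend f ∘ pure := by rw [ultrafilter_extend_extends]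
    _ = Subtype.val ∘ Ultrafilter.extend bK ∘ pure := by rw [← Function.comp_assoc, hF]; rfl
    _ = b := by rw [ultrafilter_extend_extends]; rfl

theorem disjoint_closure_of_continuous_le_of_le {X : Type*} [TopologicalSpace X] {S T : Set X}
    {g : X → ℝ} (hg : Continuous g) {a b : ℝ} (hab : a < b) (hS : ∀ x ∈ S, g x ≤ a)
    (hT : ∀ x ∈ T, b ≤ g x) : Disjoint (closure S) (closure T) := by
  have hS' : closure S ⊆ {x | g x ≤ a} := closure_minimal hS (isClosed_le hg continuous_const)
  have hT' : closure T ⊆ {x | b ≤ g x} := closure_minimal hT (isClosed_le continuous_const hg)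
  exact disjoint_left.mpr fun x hxS hxT => (hab.trans_le (hT' hxT)).not_ge (hS' hxS)

open Complex Real BoundedContinuousFunction

attribute [local instance] ZeroLEOneClass.factZeroLtOne

local notation "𝕋" => AddCircle (1 : ℝ)

theorem AddCircle.coe_toCircle_nsmul_coe (n : ℕ) (α : ℝ) :
    (AddCircle.toCircle (n • (α : 𝕋)) : ℂ) = exp (2 * π * I * n * α) := by
  rw [← AddCircle.coe_nsmul, AddCircle.toCircle_apply_mk, Circle.coe_exp]
  push_cast
  ring_nf

noncomputable section

def expSeq (α : ℝ) : ℕ →ᵇ ℂ :=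
  BoundedContinuousFunction.ofNormedAddCommGroup (fun n => exp (2 * π * I * n * α))
    continuous_of_discreteTopology 1 fun n => by
      rw [← AddCircle.coe_toCircle_nsmul_coe, Circle.norm_coe]

@[simp] theorem expSeq_apply (α : ℝ) (n : ℕ) : expSeq α n = exp (2 * π * I * n * α) := rfl

theorem expSeq_add (α β : ℝ) : expSeq (α + β) = expSeq α * expSeq β := by
  ext n
  simp only [expSeq_apply, BoundedContinuousFunction.mul_apply, ← Complex.exp_add]
  push_cast
  ring_nf

theorem expSeq_zero : expSeq 0 = 1 := by
  ext n
  simp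

theorem star_expSeq (α : ℝ) : star (expSeq α) = expSeq (-α) := by
  ext n
  simp only [BoundedContinuousFunction.star_apply, expSeq_apply, RCLike.star_def,
    ← Complex.exp_conj, map_mul, Complex.conj_I, Complex.conj_ofReal, Complex.conj_natCast,
    map_ofNat]
  push_cast
  ring_nf

def trigSpan : Submodule ℂ (ℕ →ᵇ ℂ) := Submodule.span ℂ (Set.range expSeq)

theorem mul_mem_trigSpan {f g : ℕ →ᵇ ℂ} (hf : f ∈ trigSpan) (hg : g ∈ trigSpan) :
    f * g ∈ trigSpan := by
  have hfg : f * g ∈ Submodule.span ℂ (Set.range expSeq * Set.range expSeq) := by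
    rw [← Submodule.span_mul_span]
    exact Submodule.mul_mem_mul hf hg
  refine Submodule.span_le.mpr ?_ hfg
  rintro _ ⟨_, ⟨α, rfl⟩, _, ⟨β, rfl⟩, rfl⟩
  exact Submodule.subset_span ⟨α + β, expSeq_add α β⟩

theorem star_mem_trigSpan {f : ℕ →ᵇ ℂ} (hf : f ∈ trigSpan) : star f ∈ trigSpan := by
  induction hf using Submodule.span_induction with
  | mem x hx => obtain ⟨α, rfl⟩ := hx; exact Submodule.subset_span ⟨-α, (star_expSeq α).symm⟩
  | zero => simp
  | add x y _ _ hx hy => rw [star_add]; exact add_mem hx hy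
  | smul c x _ hx => rw [star_smul]; exact Submodule.smul_mem _ _ hx

def trigAlgebra : StarSubalgebra ℂ (ℕ →ᵇ ℂ) where
  carrier := trigSpan
  add_mem' := add_mem
  zero_mem' := zero_mem _
  mul_mem' := mul_mem_trigSpan
  one_mem' := Submodule.subset_span ⟨0, expSeq_zero⟩
  algebraMap_mem' c := by
    rw [Algebra.algebraMap_eq_smul_one]
    exact Submodule.smul_mem _ _ (Submodule.subset_span ⟨0, expSeq_zero⟩)
  star_mem' := star_mem_trigSpan

theorem almostPeriodic_of_mem_topologicalClosure {f : ℕ →ᵇ ℂ}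
    (hf : f ∈ trigAlgebra.topologicalClosure) : AlmostPeriodic f := by
  intro ε hε
  obtain ⟨g, hg, hfg⟩ := Metric.mem_closure_iff.mp hf ε hε
  obtain ⟨c, rfl⟩ := Finsupp.mem_span_range_iff_exists_finsupp.mp hg
  let e : Fin c.support.card ≃ c.support := c.support.equivFin.symm
  refine ⟨c.support.card, fun j => c (e j), fun j => e j, fun n => ?_⟩
  have hsum : (c.sum fun α a => a • expSeq α) n =
      ∑ j, c (e j) * exp (2 * π * I * n * (e j : ℝ)) := by
    rw [Finsupp.sum, BoundedContinuousFunction.coe_sum, Finset.sum_apply, ← Finset.sum_coe_sort,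
      ← Equiv.sum_comp e]
    simp
  rw [← hsum, ← dist_eq_norm]
  exact (dist_coe_le_dist n).trans_lt hfg

def bohrMap (n : ℕ) : 𝕋 → 𝕋 := fun a => n • a

def evalToCircle (a : 𝕋) : C(𝕋 → 𝕋, ℂ) :=
  ⟨fun x => AddCircle.toCircle (x a), by fun_prop⟩

def bohrPullback : C(𝕋 → 𝕋, ℂ) →⋆ₐ[ℂ] (ℕ →ᵇ ℂ) where
  toFun F := (mkOfCompact F).compContinuous ⟨bohrMap, continuous_of_discreteTopology⟩
  map_one' := rfl
  map_mul' _ _ := rfl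
  map_zero' := rfl
  map_add' _ _ := rfl
  commutes' _ := rfl
  map_star' _ := rfl

theorem continuous_bohrPullback : Continuous bohrPullback :=
  (lipschitz_compContinuous _).continuous.comp
    (Isometry.of_dist_eq fun F G => dist_mkOfCompact F G).continuous

theorem bohrPullback_evalToCircle (α : ℝ) : bohrPullback (evalToCircle α) = expSeq α := by
  ext n
  exact AddCircle.coe_toCircle_nsmul_coe n α

theorem bohrPullback_mem_topologicalClosure (F : C(𝕋 → 𝕋, ℂ)) :
    bohrPullback F ∈ trigAlgebra.topologicalClosure := by
  have hsep : (StarAlgebra.adjoin ℂ (range evalToCircle)).SeparatesPoints := by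
    intro x y hxy
    obtain ⟨a, ha⟩ := Function.ne_iff.mp hxy
    refine ⟨evalToCircle a, ⟨_, StarAlgebra.subset_adjoin ℂ _ ⟨a, rfl⟩, rfl⟩, fun h => ha ?_⟩
    exact AddCircle.injective_toCircle one_ne_zero (Subtype.coe_injective h)
  have hle : StarAlgebra.adjoin ℂ (range evalToCircle)
      ≤ trigAlgebra.topologicalClosure.comap bohrPullback := by
    refine StarAlgebra.adjoin_le ?_
    rintro _ ⟨a, rfl⟩
    obtain ⟨α, rfl⟩ := QuotientAddGroup.mk_surjective a
    show bohrPullback (evalToCircle α) ∈ trigAlgebra.topologicalClosure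
    rw [bohrPullback_evalToCircle]
    exact trigAlgebra.le_topologicalClosure (Submodule.subset_span ⟨α, rfl⟩)
  have hclosed :
      IsClosed (trigAlgebra.topologicalClosure.comap bohrPullback : Set C(𝕋 → 𝕋, ℂ)) :=
    trigAlgebra.isClosed_topologicalClosure.preimage continuous_bohrPullback
  have htop := StarSubalgebra.topologicalClosure_minimal hle hclosed
  rw [ContinuousMap.starSubalgebra_topologicalClosure_eq_top_of_separatesPoints _ hsep] at htop
  exact htop trivial

theorem SeparableByRotation.disjoint_closure_image_bohrMap {A B : Set ℕ}
    (h : SeparableByRotation A B) : Disjoint (closure (bohrMap '' A)) (closure (bohrMap '' B)) := by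
  obtain ⟨d, α, hd⟩ := h
  let proj : (𝕋 → 𝕋) → (Fin d → 𝕋) := fun x k => x (α k)
  have hproj : Continuous proj := by fun_prop
  have himage (S : Set ℕ) : proj '' (bohrMap '' S) = (fun a : ℕ => a • α) '' S := by
    rw [image_image]
    rfl
  refine (hd.preimage proj).mono ?_ ?_ <;>
  · rw [← himage]
    exact closure_subset_preimage_closure_image hproj

theorem isI0Set_of_forall_separableByRotation {E : Set ℕ}
    (hE : ∀ A B : Set ℕ, A ⊆ E → B ⊆ E → Disjoint A B → SeparableByRotation A B) :
    IsI0Set E := by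
  rintro b ⟨C, hC⟩
  have hsep (A B : Set E) (hAB : Disjoint A B) : Disjoint (closure ((bohrMap ∘ (↑)) '' A))
      (closure ((bohrMap ∘ (↑)) '' B)) := by
    simp only [image_comp]
    refine SeparableByRotation.disjoint_closure_image_bohrMap <|
      hE _ _ (Subtype.coe_image_subset E A) (Subtype.coe_image_subset E B) ?_
    exact hAB.image Subtype.val_injective.injOn (subset_univ _) (subset_univ _)
  obtain ⟨F, hF⟩ := exists_continuousMap_comp_eq_of_disjoint_closure hsep
    (isCompact_closedBall (0 : ℂ) C) (b := fun n : E => b n)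
    (fun n => mem_closedBall_zero_iff.mpr (hC n n.2))
  exact ⟨bohrPullback F, almostPeriodic_of_mem_topologicalClosure
    (bohrPullback_mem_topologicalClosure F), fun r hr => congr_fun hF ⟨r, hr⟩⟩

theorem SeparableByRotation.of_isI0Set {E A B : Set ℕ} (hE : IsI0Set E) (hA : A ⊆ E)
    (hB : B ⊆ E) (hAB : Disjoint A B) : SeparableByRotation A B := by
  obtain ⟨ψ, hψ, hψE⟩ := hE (A.indicator 1) ⟨1, fun n _ => by
    simpa using norm_indicator_le_norm_self (s := A) (1 : ℕ → ℂ) n⟩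
  obtain ⟨m, c, α, hcα⟩ := hψ (1 / 4) (by norm_num)
  let P : (Fin m → 𝕋) → ℂ := fun x => ∑ j, c j * AddCircle.toCircle (x j)
  have hP : Continuous fun x => ‖P x‖ := by fun_prop
  have hP_orbit (n : ℕ) : ‖ψ n - P (n • fun j => (α j : 𝕋))‖ < 1 / 4 := by
    simpa only [P, Pi.smul_apply, AddCircle.coe_toCircle_nsmul_coe] using hcα n
  refine ⟨m, fun j => α j, (disjoint_closure_of_continuous_le_of_le hP
    (show (1 / 4 : ℝ) < 3 / 4 by norm_num) ?_ ?_).symm⟩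
  · rintro _ ⟨n, hn, rfl⟩
    have h := hP_orbit n
    rw [hψE n (hB hn), indicator_of_notMem (hAB.notMem_of_mem_right hn), zero_sub, norm_neg] at h
    exact h.le
  · rintro _ ⟨n, hn, rfl⟩
    have h := hP_orbit n
    rw [hψE n (hA hn), indicator_of_mem hn, Pi.one_apply] at h
    have h1 := norm_sub_norm_le (1 : ℂ) (P (n • fun j => (α j : 𝕋)))
    rw [norm_one] at h1
    dsimp only
    linarith

end

theorem isI0_iff_disjoint_subsets_separable (E : Set ℕ) :
    IsI0Set E ↔ ∀ A B : Set ℕ, A ⊆ E → B ⊆ E → Disjoint A B → SeparableByRotation A B :=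
  ⟨fun hE _ _ hA hB hAB => .of_isI0Set hE hA hB hAB, isI0Set_of_forall_separableByRotation⟩
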